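/- arXiv:2212.11380 — 3 statements merged into one kernel-verified Lean document; each statement's English description precedes it below -/
import Mathlib

section
/- For k-element subsets of [n], the aging function on label-triples is injective on white triples: if (I,J,K) and (I',J',K') are white label-triples (unordered) with I∪J = I'∪J', J∪K = J'∪K', K∪I = K'∪I' (as an unordered triple of sets), then {I,J,K} = {I',J',K'}. Moreover, applying the inverse aging function to the image of a white triple recovers the original triple: (I∪J)∩(J∪K) = J, (J∪K)∩(K∪I) = K, and (K∪I)∩(I∪J) = I. -/
/-!
All three pairwise intersections of a white triple equal the common core `I ∩ J ∩ K`, so each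
of them lies in the third set. In a distributive lattice, `c ⊓ a ≤ b` gives
`(a ⊔ b) ⊓ (b ⊔ c) = b ⊔ (c ⊓ a) = b`, which is the inverse aging formula. Moreover the three
unions are pairwise distinct (`a ⊔ b = b ⊔ c` would force `a ≤ b`), so `{I, J, K}` is exactly the
set of meets of two distinct members of `{I ∪ J, J ∪ K, K ∪ I}`, and hence is determined by it.
-/

open Finset

section DistribLattice

variable {α : Type*} [DistribLattice α] {a b c : α}

theorem sup_inf_sup_eq_of_inf_le (h : c ⊓ a ≤ b) : (a ⊔ b) ⊓ (b ⊔ c) = b := by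
  rw [sup_comm a b, ← sup_inf_left, inf_comm, sup_of_le_left h]

theorem sup_ne_sup_of_inf_le (h : c ⊓ a ≤ b) (hab : ¬a ≤ b) : a ⊔ b ≠ b ⊔ c := by
  intro he
  have hb := sup_inf_sup_eq_of_inf_le h
  rw [← he, inf_idem] at hb
  exact hab (sup_eq_right.mp hb)

def pairwiseInfs {β : Type*} [Min β] (S : Set β) : Set β :=
  {z | ∃ x ∈ S, ∃ y ∈ S, x ≠ y ∧ x ⊓ y = z}

theorem pairwiseInfs_sup_triple (hab : a ⊓ b ≤ c) (hbc : b ⊓ c ≤ a) (hca : c ⊓ a ≤ b)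
    (nab : ¬a ≤ b) (nbc : ¬b ≤ c) (nca : ¬c ≤ a) :
    pairwiseInfs {a ⊔ b, b ⊔ c, c ⊔ a} = {a, b, c} := by
  have rb := sup_inf_sup_eq_of_inf_le hca
  have rc := sup_inf_sup_eq_of_inf_le hab
  have ra := sup_inf_sup_eq_of_inf_le hbc
  have dab := sup_ne_sup_of_inf_le hca nab
  have dbc := sup_ne_sup_of_inf_le hab nbc
  have dca := sup_ne_sup_of_inf_le hbc nca
  ext z
  simp only [pairwiseInfs, Set.mem_insert_iff, Set.mem_singleton_iff, Set.mem_ofPred_eq]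
  constructor
  · rintro ⟨x, hx, y, hy, hne, rfl⟩
    rcases hx with rfl | rfl | rfl <;> rcases hy with rfl | rfl | rfl <;>
      first
      | exact (hne rfl).elim
      | simp only [ra, rb, rc, true_or, or_true]
      | (rw [inf_comm]; simp only [ra, rb, rc, true_or, or_true])
  · rintro (hz | hz | hz)
    · exact ⟨c ⊔ a, by simp, a ⊔ b, by simp, dca, ra.trans hz.symm⟩
    · exact ⟨a ⊔ b, by simp, b ⊔ c, by simp, dab, rb.trans hz.symm⟩
    · exact ⟨b ⊔ c, by simp, c ⊔ a, by simp, dbc, rc.trans hz.symm⟩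

end DistribLattice

section Finset

variable {α : Type*}

theorem Finset.not_subset_of_card_eq_of_ne {s t : Finset α} (hst : #s = #t) (hne : s ≠ t) :
    ¬s ⊆ t :=
  fun h => hne (eq_of_subset_of_card_le h hst.ge)

variable [DecidableEq α] {I J K : Finset α} {k : ℕ}

theorem Finset.inter_subset_of_card_inter_le {s t u : Finset α} (h : #(s ∩ t) ≤ #(s ∩ t ∩ u)) :
    s ∩ t ⊆ u := by
  rw [← eq_of_subset_of_card_le inter_subset_left h]
  exact inter_subset_right

theorem inter_subset_third_of_white {m : ℕ} (hIJ : #(I ∩ J) = m) (hJK : #(J ∩ K) = m)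
    (hKI : #(K ∩ I) = m) (hIJK : #(I ∩ J ∩ K) = m) :
    I ∩ J ⊆ K ∧ J ∩ K ⊆ I ∧ K ∩ I ⊆ J := by
  have hJKI : #(J ∩ K ∩ I) = m := by rwa [inter_assoc, inter_comm] at hIJK
  have hKIJ : #(K ∩ I ∩ J) = m := by rwa [inter_comm, ← inter_assoc] at hIJK
  exact ⟨inter_subset_of_card_inter_le (hIJ.trans hIJK.symm).le,
    inter_subset_of_card_inter_le (hJK.trans hJKI.symm).le,
    inter_subset_of_card_inter_le (hKI.trans hKIJ.symm).le⟩

theorem pairwiseInfs_union_of_white (hI : #I = k) (hJ : #J = k) (hK : #K = k)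
    (hIJne : I ≠ J) (hJKne : J ≠ K) (hIKne : I ≠ K)
    (hIJ : #(I ∩ J) = k - 1) (hJK : #(J ∩ K) = k - 1)
    (hKI : #(K ∩ I) = k - 1) (hIJK : #(I ∩ J ∩ K) = k - 1) :
    pairwiseInfs ({I ∪ J, J ∪ K, K ∪ I} : Set (Finset α)) = {I, J, K} := by
  obtain ⟨hIJ_K, hJK_I, hKI_J⟩ := inter_subset_third_of_white hIJ hJK hKI hIJK
  exact pairwiseInfs_sup_triple hIJ_K hJK_I hKI_J
    (not_subset_of_card_eq_of_ne (hI.trans hJ.symm) hIJne)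
    (not_subset_of_card_eq_of_ne (hJ.trans hK.symm) hJKne)
    (not_subset_of_card_eq_of_ne (hK.trans hI.symm) hIKne.symm)

end Finset

/-- The aging function is injective on white label-triples (as unordered triples), and the
inverse aging function applied to the image of a white triple recovers the original
triple: `(I∪J)∩(J∪K) = J`, `(J∪K)∩(K∪I) = K`, `(K∪I)∩(I∪J) = I`. -/
theorem aging_injective_on_white (n k : ℕ) (I J K I' J' K' : Finset (Fin n))
    (hI : I.card = k) (hJ : J.card = k) (hK : K.card = k)
    (hI' : I'.card = k) (hJ' : J'.card = k) (hK' : K'.card = k)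
    (hIJne : I ≠ J) (hJKne : J ≠ K) (hIKne : I ≠ K)
    (hIJne' : I' ≠ J') (hJKne' : J' ≠ K') (hIKne' : I' ≠ K')
    (hIJ : (I ∩ J).card = k - 1) (hJK : (J ∩ K).card = k - 1)
    (hKI : (K ∩ I).card = k - 1) (hIJK : (I ∩ J ∩ K).card = k - 1)
    (hIJ' : (I' ∩ J').card = k - 1) (hJK' : (J' ∩ K').card = k - 1)
    (hKI' : (K' ∩ I').card = k - 1) (hIJK' : (I' ∩ J' ∩ K').card = k - 1)
    (himg : ({I ∪ J, J ∪ K, K ∪ I} : Set (Finset (Fin n)))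
        = ({I' ∪ J', J' ∪ K', K' ∪ I'} : Set (Finset (Fin n)))) :
    ({I, J, K} : Set (Finset (Fin n))) = ({I', J', K'} : Set (Finset (Fin n))) ∧
    (I ∪ J) ∩ (J ∪ K) = J ∧ (J ∪ K) ∩ (K ∪ I) = K ∧ (K ∪ I) ∩ (I ∪ J) = I := by
  obtain ⟨hIJ_K, hJK_I, hKI_J⟩ := inter_subset_third_of_white hIJ hJK hKI hIJK
  refine ⟨?_, sup_inf_sup_eq_of_inf_le hKI_J, sup_inf_sup_eq_of_inf_le hIJ_K,
    sup_inf_sup_eq_of_inf_le hJK_I⟩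
  rw [← pairwiseInfs_union_of_white hI hJ hK hIJne hJKne hIKne hIJ hJK hKI hIJK,
    ← pairwiseInfs_union_of_white hI' hJ' hK' hIJne' hJKne' hIKne' hIJ' hJK' hKI' hIJK', himg]
end

section
/- Let a₁, a₂, a₃, a₄ ∈ ℝ² be four points in convex position (vertices of a convex quadrilateral, listed in cyclic order a₁, a₂, a₃, a₄). Then the four pairwise sums a₁+a₂, a₂+a₃, a₃+a₄, a₄+a₁ are the vertices of a parallelogram, and the two remaining pairwise sums a₁+a₃ and a₂+a₄ lie in (the closed region bounded by) this parallelogram. -/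
/-!
The closed parallelogram spanned by the consecutive sums is the Minkowski sum of the two
diagonals, `[a₁, a₃] + [a₂, a₄]`. If `x` is the common point of the diagonals, then
`a₁ + a₃ = (a₁ + a₃ - x) + x`, where `a₁ + a₃ - x` is the reflection of `x` in the midpoint of
`[a₁, a₃]` and so lies on that diagonal; likewise for `a₂ + a₄`.
-/

open Set Pointwise

variable {𝕜 E : Type*} [AddCommGroup E]

section OrderedCommRing

variable [CommRing 𝕜] [PartialOrder 𝕜] [Module 𝕜 E]

lemma add_sub_mem_segment {a b x : E} (hx : x ∈ segment 𝕜 a b) :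
    a + b - x ∈ segment 𝕜 a b := by
  obtain ⟨s, t, hs, ht, hst, rfl⟩ := hx
  refine ⟨t, s, ht, hs, by rw [add_comm, hst], ?_⟩
  calc t • a + s • b = (s + t) • a + (s + t) • b - (s • a + t • b) := by module
    _ = a + b - (s • a + t • b) := by rw [hst, one_smul, one_smul]

lemma add_mem_segment_add_segment {a b c d x : E} (hac : x ∈ segment 𝕜 a c)
    (hbd : x ∈ segment 𝕜 b d) : a + c ∈ segment 𝕜 a c + segment 𝕜 b d :=
  ⟨a + c - x, add_sub_mem_segment hac, x, hbd, sub_add_cancel _ _⟩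

end OrderedCommRing

section LinearOrderedField

variable [Field 𝕜] [LinearOrder 𝕜] [IsStrictOrderedRing 𝕜] [Module 𝕜 E]

lemma segment_add_segment_eq_convexHull (a b c d : E) :
    segment 𝕜 a c + segment 𝕜 b d = convexHull 𝕜 {a + b, b + c, c + d, d + a} := by
  rw [← convexHull_pair, ← convexHull_pair, ← convexHull_add]
  congr 1
  ext y
  simp only [mem_add, mem_insert_iff, mem_singleton_iff]
  constructor
  · rintro ⟨u, hu | hu, v, hv | hv, rfl⟩ <;> subst hu hv <;>
      simp only [add_comm, true_or, or_true]
  · rintro (rfl | rfl | rfl | rfl)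
    exacts [⟨a, .inl rfl, b, .inl rfl, rfl⟩, ⟨c, .inr rfl, b, .inl rfl, add_comm _ _⟩,
      ⟨c, .inr rfl, d, .inr rfl, rfl⟩, ⟨a, .inl rfl, d, .inr rfl, add_comm _ _⟩]

end LinearOrderedField

theorem level2_of_convex_quadrilateral_general (a₁ a₂ a₃ a₄ : ℝ × ℝ)
    (hcyc : (segment ℝ a₁ a₃ ∩ segment ℝ a₂ a₄).Nonempty) :
    (a₁ + a₂) - (a₂ + a₃) = (a₄ + a₁) - (a₃ + a₄) ∧
    (a₁ + a₂) - (a₄ + a₁) = (a₂ + a₃) - (a₃ + a₄) ∧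
    a₁ + a₃ ∈ convexHull ℝ ({a₁ + a₂, a₂ + a₃, a₃ + a₄, a₄ + a₁} : Set (ℝ × ℝ)) ∧
    a₂ + a₄ ∈ convexHull ℝ ({a₁ + a₂, a₂ + a₃, a₃ + a₄, a₄ + a₁} : Set (ℝ × ℝ)) := by
  obtain ⟨x, hx₁₃, hx₂₄⟩ := hcyc
  rw [← segment_add_segment_eq_convexHull]
  refine ⟨by abel, by abel, add_mem_segment_add_segment hx₁₃ hx₂₄, ?_⟩
  rw [add_comm (segment ℝ a₁ a₃)]
  exact add_mem_segment_add_segment hx₂₄ hx₁₃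

/-- For four points in convex position in cyclic order `a₁ a₂ a₃ a₄`, the four pairwise
sums of consecutive points form a parallelogram, and the two remaining pairwise sums
`a₁+a₃` and `a₂+a₄` lie in the closed region bounded by this parallelogram. -/
theorem level2_of_convex_quadrilateral (a₁ a₂ a₃ a₄ : ℝ × ℝ)
    (h₁ : a₁ ∉ convexHull ℝ ({a₂, a₃, a₄} : Set (ℝ × ℝ)))
    (h₂ : a₂ ∉ convexHull ℝ ({a₁, a₃, a₄} : Set (ℝ × ℝ)))
    (h₃ : a₃ ∉ convexHull ℝ ({a₁, a₂, a₄} : Set (ℝ × ℝ)))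
    (h₄ : a₄ ∉ convexHull ℝ ({a₁, a₂, a₃} : Set (ℝ × ℝ)))
    (hcyc : (segment ℝ a₁ a₃ ∩ segment ℝ a₂ a₄).Nonempty) :
    (a₁ + a₂) - (a₂ + a₃) = (a₄ + a₁) - (a₃ + a₄) ∧
    (a₁ + a₂) - (a₄ + a₁) = (a₂ + a₃) - (a₃ + a₄) ∧
    a₁ + a₃ ∈ convexHull ℝ ({a₁ + a₂, a₂ + a₃, a₃ + a₄, a₄ + a₁} : Set (ℝ × ℝ)) ∧
    a₂ + a₄ ∈ convexHull ℝ ({a₁ + a₂, a₂ + a₃, a₃ + a₄, a₄ + a₁} : Set (ℝ × ℝ)) :=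
  level2_of_convex_quadrilateral_general a₁ a₂ a₃ a₄ hcyc
end

section
/- Let a₁, a₂, a₃, a₄ ∈ ℝ² with a₄ in the interior of the triangle a₁a₂a₃ (a generic non-convex configuration). Then the six pairwise sums a_i + a_j (1 ≤ i < j ≤ 4) are the vertices of a centrally symmetric convex hexagon, with center c = (a₁+a₂+a₃+a₄)/2; specifically, a_i + a_j and a_k + a_l are symmetric through c whenever {i,j,k,l} = {1,2,3,4}. -/
/-!
If `a₁, a₂, a₃` are not collinear, take a pair `{i, j} ⊆ {1, 2, 3}` with `k` the third index,
and a linear functional `f` with `f aᵢ = f aⱼ > f aₖ`. As `a₄` is a combination of `a₁, a₂, a₃`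
with positive weights, also `f a₄ < f aᵢ`; hence `aᵢ + aⱼ` is the unique maximiser and
`aₖ + a₄` the unique minimiser of `f` on the six sums, so both are vertices. The three choices of
`{i, j}` cover all six sums. If `a₁, a₂, a₃` are collinear, then so are the six sums, and
genericity leaves at most two distinct ones.
-/

open Set Pointwise

section Collinear

variable {k V : Type*} [Field k] [AddCommGroup V] [Module k V]

theorem Collinear.add_self {s : Set V} (h : Collinear k s) : Collinear k (s + s) := by
  obtain ⟨p, v, hv⟩ := (collinear_iff_exists_forall_eq_smul_vadd s).1 h
  refine (collinear_iff_exists_forall_eq_smul_vadd _).2 ⟨p + p, v, ?_⟩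
  rintro _ ⟨x, hx, y, hy, rfl⟩
  obtain ⟨r, rfl⟩ := hv x hx
  obtain ⟨t, rfl⟩ := hv y hy
  exact ⟨r + t, by simp only [vadd_eq_add, add_smul]; abel⟩

theorem smul_add_smul_add_smul_mem_affineSpan {α β γ : k} (h : α + β + γ = 1) (a b c : V) :
    α • a + β • b + γ • c ∈ affineSpan k {a, b, c} := by
  rw [← AffineSubspace.vsub_right_mem_direction_iff_mem (mem_affineSpan k (mem_insert a _)),
    direction_affineSpan]
  obtain rfl : α = 1 - β - γ := by rw [← h]; ring
  have hsplit : (1 - β - γ) • a + β • b + γ • c -ᵥ a = β • (b -ᵥ a) + γ • (c -ᵥ a) := by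
    simp only [vsub_eq_sub]; module
  rw [hsplit]
  exact add_mem (Submodule.smul_mem _ _ (vsub_mem_vectorSpan k (by simp) (by simp)))
    (Submodule.smul_mem _ _ (vsub_mem_vectorSpan k (by simp) (by simp)))

end Collinear

section PairSums

variable {M : Type*}

def pairSums [Add M] (a b c d : M) : Set M := {a + b, a + c, a + d, b + c, b + d, c + d}

theorem pairSums_swap_middle [AddCommMagma M] (a b c d : M) :
    pairSums a c b d = pairSums a b c d := by
  ext x
  simp only [pairSums, mem_insert_iff, mem_singleton_iff, add_comm c b]
  tauto

theorem pairSums_rotate [AddCommMagma M] (a b c d : M) :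
    pairSums b c a d = pairSums a b c d := by
  ext x
  simp only [pairSums, mem_insert_iff, mem_singleton_iff, add_comm b a, add_comm c a]
  tauto

theorem pairSums_subset_add [Add M] {a b c d : M} {s : Set M} (ha : a ∈ s) (hb : b ∈ s)
    (hc : c ∈ s) (hd : d ∈ s) : pairSums a b c d ⊆ s + s := by
  rintro x (rfl | rfl | rfl | rfl | rfl | rfl) <;> exact add_mem_add ‹_› ‹_›

theorem sub_mem_pairSums [AddCommGroup M] {a b c d x : M} (hx : x ∈ pairSums a b c d) :
    a + b + c + d - x ∈ pairSums a b c d := by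
  rcases hx with rfl | rfl | rfl | rfl | rfl | rfl <;>
    simp only [pairSums, mem_insert_iff, mem_singleton_iff] <;> abel_nf <;> simp

end PairSums

section LinearOrderedField

variable {𝕜 E : Type*} [Field 𝕜] [LinearOrder 𝕜] [AddCommGroup E] [Module 𝕜 E]

theorem notMem_convexHull_diff_singleton_of_collinear {s : Set E} (hs : Collinear 𝕜 s)
    (hgen : ∀ x ∈ s, ∀ y ∈ s, ∀ z ∈ s, x ≠ y → y ≠ z → x ≠ z → ¬ Collinear 𝕜 {x, y, z})
    {x : E} (hx : x ∈ s) : x ∉ convexHull 𝕜 (s \ {x}) := by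
  have hsub : (s \ {x}).Subsingleton := by
    rintro y ⟨hy, hyx⟩ z ⟨hz, hzx⟩
    by_contra hyz
    exact hgen x hx y hy z hz (Ne.symm hyx) hyz (Ne.symm hzx)
      (hs.subset (by simp [insert_subset_iff, hx, hy, hz]))
  rw [hsub.convex.convexHull_eq]
  exact fun h => h.2 rfl

variable [IsStrictOrderedRing 𝕜]

theorem notMem_convexHull_of_forall_lt (f : E →ₗ[𝕜] 𝕜) {s : Set E} {x : E}
    (h : ∀ y ∈ s, f y < f x) : x ∉ convexHull 𝕜 s := fun hx =>
  lt_irrefl _ (convexHull_min h (convex_halfSpace_lt f.isLinear (f x)) hx)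

theorem exists_linearMap_apply_eq_apply_lt_of_not_collinear {a b c : E}
    (h : ¬ Collinear 𝕜 {a, b, c}) : ∃ f : E →ₗ[𝕜] 𝕜, f a = f b ∧ f c < f a := by
  have hc : c - a ∉ 𝕜 ∙ (b - a) := fun hmem => h <| by
    obtain ⟨r, hr⟩ := Submodule.mem_span_singleton.1 hmem
    refine (collinear_iff_of_mem (mem_insert a _)).2 ⟨b - a, ?_⟩
    simp only [mem_insert_iff, mem_singleton_iff, forall_eq_or_imp, forall_eq, vadd_eq_add]
    exact ⟨⟨0, by simp⟩, ⟨1, by simp⟩, ⟨r, by rw [hr]; abel⟩⟩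
  obtain ⟨g, hg, hker⟩ := Submodule.exists_dual_map_eq_bot_of_notMem hc inferInstance
  have hba : g (b - a) = 0 := by
    simpa [hker] using Submodule.mem_map_of_mem (f := g) (Submodule.mem_span_singleton_self (b - a))
  refine ⟨-g (c - a) • g, ?_, ?_⟩
  · simp only [LinearMap.smul_apply, map_sub, sub_eq_zero] at hba ⊢
    rw [hba]
  · have key : (-g (c - a) • g) c - (-g (c - a) • g) a = -g (c - a) ^ 2 := by
      simp only [LinearMap.smul_apply, smul_eq_mul, map_sub]; ring
    linarith [sq_pos_of_ne_zero hg]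

theorem add_notMem_convexHull_pairSums_of_not_collinear {a b c d : E}
    (h : ¬ Collinear 𝕜 {a, b, c}) {α β γ : 𝕜} (hγ : 0 < γ) (hs : α + β + γ = 1)
    (hd : d = α • a + β • b + γ • c) :
    a + b ∉ convexHull 𝕜 (pairSums a b c d \ {a + b}) ∧
      c + d ∉ convexHull 𝕜 (pairSums a b c d \ {c + d}) := by
  obtain ⟨f, hab, hca⟩ := exists_linearMap_apply_eq_apply_lt_of_not_collinear h
  have hda : f d < f a := by
    have hfd : f d = f a - γ * (f a - f c) := by
      simp only [hd, map_add, map_smul, smul_eq_mul, ← hab]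
      linear_combination f a * hs
    rw [hfd]
    exact sub_lt_self _ (mul_pos hγ (sub_pos.2 hca))
  constructor
  · refine notMem_convexHull_of_forall_lt f fun y ⟨hy, hyx⟩ => ?_
    rcases hy with rfl | rfl | rfl | rfl | rfl | rfl <;>
      simp only [mem_singleton_iff, not_true_eq_false, map_add] at hyx ⊢ <;> linarith
  · refine notMem_convexHull_of_forall_lt (-f) fun y ⟨hy, hyx⟩ => ?_
    rcases hy with rfl | rfl | rfl | rfl | rfl | rfl <;>
      simp only [mem_singleton_iff, not_true_eq_false, map_add, LinearMap.neg_apply] at hyx ⊢ <;>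
      linarith

end LinearOrderedField

/-- For a non-convex configuration (with `a₄` interior to the triangle `a₁a₂a₃`) and
generic, the six pairwise sums are the vertices of a centrally symmetric convex hexagon
with center `c = (a₁+a₂+a₃+a₄)/2`: each sum is a vertex of the convex hull of the six
sums, and `aᵢ+aⱼ`, `aₖ+aₗ` are symmetric through `c` whenever `{i,j,k,l} = {1,2,3,4}`. -/
theorem level2_of_nonconvex_configuration (a₁ a₂ a₃ a₄ : ℝ × ℝ)
    (hint : ∃ α β γ : ℝ, 0 < α ∧ 0 < β ∧ 0 < γ ∧ α + β + γ = 1 ∧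
      a₄ = α • a₁ + β • a₂ + γ • a₃)
    (S : Set (ℝ × ℝ))
    (hS : S = {a₁ + a₂, a₁ + a₃, a₁ + a₄, a₂ + a₃, a₂ + a₄, a₃ + a₄})
    (hgen : ∀ x ∈ S, ∀ y ∈ S, ∀ z ∈ S, x ≠ y → y ≠ z → x ≠ z →
      ¬ Collinear ℝ ({x, y, z} : Set (ℝ × ℝ))) :
    (∀ x ∈ S, x ∉ convexHull ℝ (S \ {x})) ∧
    (∀ x ∈ S, (a₁ + a₂ + a₃ + a₄) - x ∈ S) ∧
    midpoint ℝ (a₁ + a₂) (a₃ + a₄) = (2⁻¹ : ℝ) • (a₁ + a₂ + a₃ + a₄) ∧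
    midpoint ℝ (a₁ + a₃) (a₂ + a₄) = (2⁻¹ : ℝ) • (a₁ + a₂ + a₃ + a₄) ∧
    midpoint ℝ (a₁ + a₄) (a₂ + a₃) = (2⁻¹ : ℝ) • (a₁ + a₂ + a₃ + a₄) := by
  obtain ⟨α, β, γ, hα, hβ, hγ, hs, h4⟩ := hint
  obtain rfl : S = pairSums a₁ a₂ a₃ a₄ := hS
  refine ⟨?_, fun x => sub_mem_pairSums, ?_, ?_, ?_⟩
  · by_cases hcol : Collinear ℝ ({a₁, a₂, a₃} : Set (ℝ × ℝ))
    · have hT : Collinear ℝ ({a₄, a₁, a₂, a₃} : Set (ℝ × ℝ)) :=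
        (collinear_insert_iff_of_mem_affineSpan
          (h4 ▸ smul_add_smul_add_smul_mem_affineSpan hs a₁ a₂ a₃)).2 hcol
      exact fun x => notMem_convexHull_diff_singleton_of_collinear
        (hT.add_self.subset (pairSums_subset_add (by simp) (by simp) (by simp) (by simp))) hgen
    · have h₁₂ := add_notMem_convexHull_pairSums_of_not_collinear hcol hγ hs h4
      have h₁₃ := add_notMem_convexHull_pairSums_of_not_collinear (by rwa [pair_comm])
        hβ (by linarith) (h4.trans (add_right_comm _ _ _))
      have h₂₃ := add_notMem_convexHull_pairSums_of_not_collinear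
        (by rwa [pair_comm a₃ a₁, insert_comm a₂ a₁]) hα (by linarith)
        (show a₄ = β • a₂ + γ • a₃ + α • a₁ by rw [h4]; abel)
      rw [pairSums_swap_middle] at h₁₃
      rw [pairSums_rotate] at h₂₃
      rintro x (rfl | rfl | rfl | rfl | rfl | rfl)
      exacts [h₁₂.1, h₁₃.1, h₂₃.2, h₂₃.1, h₁₃.2, h₁₂.2]
  all_goals rw [midpoint_eq_smul_add, invOf_eq_inv]; congr 1; abel
end
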